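/- Let q be a fixed prime power. Then there exist δ > 0, a natural number N, and for each n a pair of normal subsets S_n, T_n ⊆ SL_n(F_q), such that: (1) for every n, the product set S_nT_n contains no transvection; and (2) for every n ≥ N, |S_n| ≥ δ·|SL_n(F_q)| and |T_n| ≥ δ·|SL_n(F_q)|. -/

import Mathlib

open Pointwise Matrix LinearMap
set_option linter.unusedSectionVars false
set_option maxHeartbeats 1000000

namespace Stmt6Aux

variable {F : Type*} [Field F] [Fintype F] [DecidableEq F]

/-- dimension of the fixed space of an element of `SL_n(F)` -/
noncomputable def fixd {n : ℕ} (g : Matrix.SpecialLinearGroup (Fin n) F) : ℕ :=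
  Module.finrank F (LinearMap.ker
    (Matrix.toLin' (g : Matrix (Fin n) (Fin n) F) - LinearMap.id))

lemma mem_fixker {n : ℕ} (g : Matrix.SpecialLinearGroup (Fin n) F) (v : Fin n → F) :
    v ∈ LinearMap.ker (Matrix.toLin' (g : Matrix (Fin n) (Fin n) F) - LinearMap.id) ↔
      Matrix.toLin' (g : Matrix (Fin n) (Fin n) F) v = v := by
  simp [LinearMap.mem_ker, sub_eq_zero]

lemma fixd_conj {n : ℕ} (g s : Matrix.SpecialLinearGroup (Fin n) F) :
    fixd (g * s * g⁻¹) = fixd s := by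
  set e := Matrix.SpecialLinearGroup.toLin' g with he
  have hker : LinearMap.ker (Matrix.toLin' ((g * s * g⁻¹ : Matrix.SpecialLinearGroup (Fin n) F) :
        Matrix (Fin n) (Fin n) F) - LinearMap.id)
      = Submodule.map (e : (Fin n → F) →ₗ[F] (Fin n → F))
          (LinearMap.ker (Matrix.toLin' (s : Matrix (Fin n) (Fin n) F) - LinearMap.id)) := by
    ext v
    rw [Submodule.mem_map_equiv, mem_fixker, mem_fixker]
    have hm : Matrix.toLin' ((g * s * g⁻¹ : Matrix.SpecialLinearGroup (Fin n) F) :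
        Matrix (Fin n) (Fin n) F) v
        = e (Matrix.toLin' (s : Matrix (Fin n) (Fin n) F) (e.symm v)) := by
      simp only [Matrix.SpecialLinearGroup.coe_mul, Matrix.toLin'_mul, LinearMap.comp_apply]
      rfl
    rw [hm]
    rw [show (e.symm v) = Matrix.toLin' ((g⁻¹ : Matrix.SpecialLinearGroup (Fin n) F) :
        Matrix (Fin n) (Fin n) F) v from rfl]
    constructor
    · intro h
      have := congrArg e.symm h
      exact (e.symm_apply_apply _).symm.trans this
    · intro h; rw [h]; exact e.apply_symm_apply v
  unfold fixd
  rw [hker, LinearEquiv.finrank_map_eq]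

lemma basis_extend {n d : ℕ} (hd : d ≤ n) {v : Fin d → (Fin n → F)}
    (hv : LinearIndependent F v) :
    ∃ b : Module.Basis (Fin d ⊕ Fin (n - d)) F (Fin n → F), ∀ i, b (Sum.inl i) = v i := by
  set W : Submodule F (Fin n → F) := Submodule.span F (Set.range v) with hW
  obtain ⟨W', hc⟩ := Submodule.exists_isCompl W
  have hrk : Module.finrank F (Fin n → F) = n := by
    simp [Module.finrank_fintype_fun_eq_card]
  have hWrk : Module.finrank F W = d := by
    rw [hW, finrank_span_eq_card hv, Fintype.card_fin]
  have hW'rk : Module.finrank F W' = n - d := by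
    have h := Submodule.finrank_add_eq_of_isCompl hc
    rw [hrk, hWrk] at h
    omega
  let c0 : Module.Basis (Fin (Module.finrank F W')) F W' := Module.finBasis F W'
  let c : Module.Basis (Fin (n - d)) F W' := c0.reindex (finCongr hW'rk)
  have hindep : LinearIndependent F (Sum.elim v (fun j => (c j : Fin n → F))) := by
    apply LinearIndependent.sum_type hv
    · exact (c.linearIndependent.map' W'.subtype (Submodule.ker_subtype W'))
    · have h1 : Submodule.span F (Set.range fun j => ((c j : Fin n → F))) = W' := by
        have heq : (Set.range fun j => ((c j : Fin n → F)))
            = W'.subtype '' (Set.range c) := by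
          rw [← Set.range_comp]; rfl
        rw [heq, Submodule.span_image, c.span_eq, Submodule.map_subtype_top]
      rw [h1]
      exact hc.disjoint
  have hspan : ⊤ ≤ Submodule.span F (Set.range (Sum.elim v (fun j => (c j : Fin n → F)))) := by
    have heq : (Set.range fun j => ((c j : Fin n → F)))
        = W'.subtype '' (Set.range c) := by
      rw [← Set.range_comp]; rfl
    rw [Set.Sum.elim_range, Submodule.span_union, heq, Submodule.span_image, c.span_eq,
      Submodule.map_subtype_top, ← hW, hc.sup_eq_top]
  exact ⟨Module.Basis.mk hindep hspan, fun i => by simp [Module.Basis.mk_apply]⟩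

/-- transitivity of `SL_n(F)` on linearly independent `d`-tuples, for `d < n` -/
lemma sl_transitive {n d : ℕ} (hd : d < n) {v w : Fin d → (Fin n → F)}
    (hv : LinearIndependent F v) (hw : LinearIndependent F w) :
    ∃ g : Matrix.SpecialLinearGroup (Fin n) F, ∀ i,
      Matrix.toLin' (g : Matrix (Fin n) (Fin n) F) (v i) = w i := by
  obtain ⟨bv, hbv⟩ := basis_extend hd.le hv
  obtain ⟨bw, hbw⟩ := basis_extend hd.le hw
  set cdet : F := bv.det bw with hcdet
  have hcu : IsUnit cdet := bv.isUnit_det bw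
  have hpos : 0 < n - d := by omega
  let j0 : Fin (n - d) := ⟨0, hpos⟩
  let u : (Fin d ⊕ Fin (n - d)) → Fˣ := fun i => if i = Sum.inr j0 then hcu.unit⁻¹ else 1
  let bw' := bw.unitsSMul u
  let e := bv.equiv bw' (Equiv.refl _)
  have he1 : ∀ i, e (v i) = w i := by
    intro i
    rw [← hbv i]
    show bv.equiv bw' (Equiv.refl _) (bv (Sum.inl i)) = w i
    rw [Module.Basis.equiv_apply, Equiv.refl_apply, Module.Basis.unitsSMul_apply]
    have : u (Sum.inl i) = 1 := if_neg (by simp)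
    rw [this, one_smul, hbw i]
  have hprod : (∏ i : Fin d ⊕ Fin (n - d), (u i : F)) = ((hcu.unit⁻¹ : Fˣ) : F) := by
    rw [Finset.prod_eq_single (Sum.inr j0)]
    · simp [u]
    · intro b _ hb
      simp [u, if_neg hb]
    · simp
  have hdetbw' : bv.det ⇑bw' = ((hcu.unit⁻¹ : Fˣ) : F) * cdet := by
    have hfun : ⇑bw' = fun i => (u i : F) • bw i := by
      funext i; exact Module.Basis.unitsSMul_apply i
    rw [hfun]
    have := (bv.det).toMultilinearMap.map_smul_univ (fun i => (u i : F)) ⇑bw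
    rw [show ((bv.det).toMultilinearMap ⇑bw : F) = bv.det ⇑bw from rfl] at this
    rw [show ((bv.det).toMultilinearMap (fun i => (u i : F) • bw i) : F)
        = bv.det (fun i => (u i : F) • bw i) from rfl] at this
    rw [this, hprod]
    simp [hcdet, smul_eq_mul]
  have hdet : LinearMap.det (e : (Fin n → F) →ₗ[F] (Fin n → F)) = 1 := by
    have h1 : bv.det (⇑e ∘ ⇑bv) = LinearMap.det ((e : (Fin n → F) →ₗ[F] (Fin n → F)) ∘ₗ
        (bv.equiv bv (Equiv.refl _) : (Fin n → F) →ₗ[F] (Fin n → F))) :=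
      Module.Basis.det_comp_basis bv bv (e : (Fin n → F) →ₗ[F] (Fin n → F))
    rw [Module.Basis.equiv_refl] at h1
    have h2 : ⇑e ∘ ⇑bv = ⇑bw' := by
      funext i; exact bv.equiv_apply i bw' (Equiv.refl _)
    rw [h2, hdetbw'] at h1
    rw [IsUnit.val_inv_mul hcu] at h1
    simpa using h1.symm
  refine ⟨⟨LinearMap.toMatrix' (e : (Fin n → F) →ₗ[F] (Fin n → F)), ?_⟩, ?_⟩
  · rw [LinearMap.det_toMatrix']; exact hdet
  · intro i
    show Matrix.toLin' (LinearMap.toMatrix' (e : (Fin n → F) →ₗ[F] (Fin n → F))) (v i) = w i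
    rw [Matrix.toLin'_toMatrix']
    exact he1 i

-- action of SL_n on vectors
noncomputable local instance actV (n : ℕ) :
    MulAction (Matrix.SpecialLinearGroup (Fin n) F) (Fin n → F) where
  smul g v := Matrix.toLin' (g : Matrix (Fin n) (Fin n) F) v
  one_smul v := by
    show Matrix.toLin' _ v = v
    simp [Matrix.SpecialLinearGroup.coe_one]
  mul_smul g h v := by
    show Matrix.toLin' _ v = Matrix.toLin' _ (Matrix.toLin' _ v)
    simp [Matrix.SpecialLinearGroup.coe_mul, Matrix.toLin'_mul]

attribute [local instance] Fintype.ofFinite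

/-- master counting identity -/
lemma master {n d : ℕ} (hd : d < n) :
    ∑ g : Matrix.SpecialLinearGroup (Fin n) F,
      Nat.card {t : Fin d → (Fin n → F) // LinearIndependent F t ∧
        ∀ i, Matrix.toLin' (g : Matrix (Fin n) (Fin n) F) (t i) = t i}
      = Nat.card (Matrix.SpecialLinearGroup (Fin n) F) := by
  classical
  set G := Matrix.SpecialLinearGroup (Fin n) F
  set T := (Fin d → (Fin n → F))
  have ht0 : ∃ t0 : T, LinearIndependent F t0 := by
    refine ⟨fun i => Pi.basisFun F (Fin n) (Fin.castLE hd.le i), ?_⟩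
    exact (Pi.basisFun F (Fin n)).linearIndependent.comp _ (Fin.castLE_injective hd.le)
  obtain ⟨t0, ht0⟩ := ht0
  have hsmul_indep : ∀ (g : G) (t : T), LinearIndependent F t → LinearIndependent F (g • t) := by
    intro g t ht
    have h := ht.map' (Matrix.toLin' (g : Matrix (Fin n) (Fin n) F))
      (Matrix.SpecialLinearGroup.toLin' g).ker
    exact h
  have horb : ∀ t : T, LinearIndependent F t →
      MulAction.orbit G t = {t : T | LinearIndependent F t} := by
    intro t ht
    ext t'
    constructor
    · rintro ⟨g, rfl⟩
      exact hsmul_indep g t ht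
    · intro ht'
      obtain ⟨g, hg⟩ := sl_transitive hd ht ht'
      exact ⟨g, by funext i; exact hg i⟩
  have hos : ∀ t : T, LinearIndependent F t →
      Fintype.card {t : T // LinearIndependent F t} *
        Fintype.card (MulAction.stabilizer G t) = Fintype.card G := by
    intro t ht
    have h := MulAction.card_orbit_mul_card_stabilizer_eq_card_group G t
    rw [← h]
    congr 1
    refine Fintype.card_congr ?_
    refine (Equiv.subtypeEquivRight ?_).trans (Equiv.setCongr (horb t ht)).symm
    intro t'; simp [Set.mem_setOf_eq]
  have hB : ∀ (g : G) (t : T), (LinearIndependent F t ∧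
        ∀ i, Matrix.toLin' (g : Matrix (Fin n) (Fin n) F) (t i) = t i) ↔
      (LinearIndependent F t ∧ g • t = t) := by
    intro g t
    constructor
    · rintro ⟨h1, h2⟩; exact ⟨h1, funext fun i => h2 i⟩
    · rintro ⟨h1, h2⟩; exact ⟨h1, fun i => congrFun h2 i⟩
  calc
    ∑ g : G, Nat.card {t : T // LinearIndependent F t ∧
        ∀ i, Matrix.toLin' (g : Matrix (Fin n) (Fin n) F) (t i) = t i}
      = ∑ g : G, Fintype.card {t : T // LinearIndependent F t ∧ g • t = t} := by
        refine Finset.sum_congr rfl fun g _ => ?_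
        rw [Nat.card_eq_fintype_card]
        exact Fintype.card_congr (Equiv.subtypeEquivRight (fun t => hB g t))
    _ = Fintype.card (Σ g : G, {t : T // LinearIndependent F t ∧ g • t = t}) := by
        rw [Fintype.card_sigma]
    _ = Fintype.card (Σ t : T, {g : G // LinearIndependent F t ∧ g • t = t}) := by
        refine Fintype.card_congr ?_
        refine ((Equiv.subtypeProdEquivSigmaSubtype _).symm.trans ?_).trans
          (Equiv.subtypeProdEquivSigmaSubtype (fun (t : T) (g : G) =>
            LinearIndependent F t ∧ g • t = t))
        refine (Equiv.prodComm G T).subtypeEquiv ?_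
        intro p; rfl
    _ = ∑ t : T, Fintype.card {g : G // LinearIndependent F t ∧ g • t = t} := by
        rw [Fintype.card_sigma]
    _ = ∑ t : T, (if LinearIndependent F t
          then Fintype.card (MulAction.stabilizer G t0) else 0) := by
        refine Finset.sum_congr rfl fun t _ => ?_
        by_cases ht : LinearIndependent F t
        · rw [if_pos ht]
          have h1 : Fintype.card {g : G // LinearIndependent F t ∧ g • t = t}
              = Fintype.card (MulAction.stabilizer G t) := by
            refine Fintype.card_congr (Equiv.subtypeEquivRight ?_)
            intro g
            simp only [MulAction.mem_stabilizer_iff, ht, true_and]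
            exact Iff.rfl
          rw [h1]
          have hX0 : 0 < Fintype.card {t : T // LinearIndependent F t} :=
            Fintype.card_pos_iff.mpr ⟨⟨t0, ht0⟩⟩
          have := (hos t ht).trans (hos t0 ht0).symm
          exact Nat.eq_of_mul_eq_mul_left hX0 this
        · rw [if_neg ht]
          rw [Fintype.card_eq_zero_iff]
          exact ⟨fun g => ht g.2.1⟩
    _ = Fintype.card {t : T // LinearIndependent F t} *
          Fintype.card (MulAction.stabilizer G t0) := by
        rw [← Finset.sum_filter, Finset.sum_const, smul_eq_mul, ← Fintype.card_subtype]
    _ = Fintype.card G := hos t0 ht0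
    _ = Nat.card G := (Nat.card_eq_fintype_card).symm

/-- per-element count of fixed independent tuples -/
lemma fixcount {n d : ℕ} (g : Matrix.SpecialLinearGroup (Fin n) F) :
    Nat.card {t : Fin d → (Fin n → F) // LinearIndependent F t ∧
        ∀ i, Matrix.toLin' (g : Matrix (Fin n) (Fin n) F) (t i) = t i}
      = ∏ i : Fin d, (Fintype.card F ^ (fixd g) - Fintype.card F ^ (i : ℕ)) := by
  classical
  set K := LinearMap.ker (Matrix.toLin' (g : Matrix (Fin n) (Fin n) F) - LinearMap.id) with hK
  have hcard : Nat.card {t : Fin d → (Fin n → F) // LinearIndependent F t ∧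
        ∀ i, Matrix.toLin' (g : Matrix (Fin n) (Fin n) F) (t i) = t i}
      = Nat.card {t : Fin d → K // LinearIndependent F t} := by
    refine Nat.card_congr (Equiv.symm ?_)
    refine
      { toFun := fun t => ⟨fun i => (t.1 i : Fin n → F), ?_, fun i => (mem_fixker g _).mp (t.1 i).2⟩
        invFun := fun t => ⟨fun i => ⟨t.1 i, (mem_fixker g _).mpr (t.2.2 i)⟩, ?_⟩
        left_inv := fun t => by ext i : 2; rfl
        right_inv := fun t => by ext i : 2; rfl }
    · exact t.2.map' K.subtype (Submodule.ker_subtype K)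
    · exact LinearIndependent.of_comp K.subtype t.2.1
  rw [hcard]
  by_cases hle : d ≤ fixd g
  · rw [card_linearIndependent (K := F) (V := ↥K) hle]; rfl
  · have h0 : Nat.card {t : Fin d → K // LinearIndependent F t} = 0 := by
      have : IsEmpty {t : Fin d → K // LinearIndependent F t} := by
        refine ⟨fun t => hle ?_⟩
        have := LinearIndependent.fintype_card_le_finrank t.2
        have h' : d ≤ Module.finrank F K := by simpa using this
        exact h'
      exact Nat.card_of_isEmpty
    rw [h0]
    have hlt : fixd g < d := not_le.mp hle
    symm
    set i0 : Fin d := ⟨fixd g, hlt⟩ with hi0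
    have hz : Fintype.card F ^ (fixd g) - Fintype.card F ^ ((i0 : Fin d) : ℕ) = 0 := by
      simp [hi0]
    exact Finset.prod_eq_zero (Finset.mem_univ i0) hz

lemma master_fix {n d : ℕ} (hd : d < n) :
    ∑ g : Matrix.SpecialLinearGroup (Fin n) F,
      ∏ i : Fin d, (Fintype.card F ^ (fixd g) - Fintype.card F ^ (i : ℕ))
      = Nat.card (Matrix.SpecialLinearGroup (Fin n) F) := by
  rw [← master hd]
  exact Finset.sum_congr rfl fun g _ => (fixcount g).symm

lemma qge2 : 2 ≤ Fintype.card F := Fintype.one_lt_card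

section counts

variable {n : ℕ}

local notation "q" => Fintype.card F
local notation "G" => Matrix.SpecialLinearGroup (Fin n) F

open Finset in
/-- T-side bound -/
lemma Tbound (hn : 5 ≤ n) :
    (Nat.card G : ℝ) * (5 / 6) ≤ Nat.card {g : G | fixd g ≤ 1} := by
  classical
  have hq := qge2 (F := F)
  have hpt : ∀ g : G, 2 ≤ fixd g →
      6 ≤ ∏ i : Fin 2, (q ^ (fixd g) - q ^ (i : ℕ)) := by
    intro g hg
    rw [Fin.prod_univ_two]
    have hm2 : q ^ 2 ≤ q ^ fixd g := Nat.pow_le_pow_right (by omega) hg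
    have hqq2 : q ^ 2 = q * q := sq q
    have hqmul : 2 * q ≤ q * q := Nat.mul_le_mul_right q hq
    have hp1 : q ^ (1 : ℕ) = q := pow_one q
    have hp0 : q ^ (0 : ℕ) = 1 := pow_zero q
    have h2 : 2 ≤ q ^ fixd g - q ^ (1 : ℕ) := by omega
    have h3 : 3 ≤ q ^ fixd g - q ^ (0 : ℕ) := by omega
    calc (6 : ℕ) = 3 * 2 := by norm_num
    _ ≤ (q ^ fixd g - q ^ (0:ℕ)) * (q ^ fixd g - q ^ (1:ℕ)) := Nat.mul_le_mul h3 h2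
  have hbig : 6 * (Finset.univ.filter (fun g : G => 2 ≤ fixd g)).card ≤ Nat.card G := by
    rw [← master_fix (show 2 < n by omega)]
    calc 6 * (Finset.univ.filter (fun g : G => 2 ≤ fixd g)).card
        = ∑ g ∈ Finset.univ.filter (fun g : G => 2 ≤ fixd g), 6 := by
          rw [Finset.sum_const, smul_eq_mul, mul_comm]
      _ ≤ ∑ g ∈ Finset.univ.filter (fun g : G => 2 ≤ fixd g),
            ∏ i : Fin 2, (q ^ (fixd g) - q ^ (i : ℕ)) := by
          refine Finset.sum_le_sum fun g hg => hpt g ?_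
          simpa using (Finset.mem_filter.mp hg).2
      _ ≤ ∑ g : G, ∏ i : Fin 2, (q ^ (fixd g) - q ^ (i : ℕ)) :=
          Finset.sum_le_sum_of_subset (Finset.filter_subset _ _)
  have hcompl : Nat.card {g : G | fixd g ≤ 1}
      = Fintype.card G - (Finset.univ.filter (fun g : G => 2 ≤ fixd g)).card := by
    have h1 : Nat.card {g : G | fixd g ≤ 1}
        = (Finset.univ.filter (fun g : G => fixd g ≤ 1)).card := by
      rw [Nat.card_eq_fintype_card]
      rw [← Fintype.card_subtype]
      rfl
    rw [h1]
    have h2 := Finset.card_filter_add_card_filter_not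
      (s := (Finset.univ : Finset G)) (p := fun g : G => 2 ≤ fixd g)
    have h3 : (Finset.univ.filter (fun g : G => ¬ 2 ≤ fixd g))
        = (Finset.univ.filter (fun g : G => fixd g ≤ 1)) := by
      apply Finset.filter_congr
      intro g _
      constructor
      · intro h; omega
      · intro h; omega
    rw [h3] at h2
    rw [Finset.card_univ] at h2
    omega
  have hG : Nat.card G = Fintype.card G := Nat.card_eq_fintype_card
  rw [hcompl]
  have hle : (Finset.univ.filter (fun g : G => 2 ≤ fixd g)).card ≤ Fintype.card G := by
    rw [← Finset.card_univ]; exact Finset.card_le_card (Finset.filter_subset _ _)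
  rw [Nat.cast_sub hle, hG]
  have hc : (6:ℝ) * ((Finset.univ.filter (fun g : G => 2 ≤ fixd g)).card : ℝ)
      ≤ (Fintype.card G : ℝ) := by
    have h := hbig
    rw [hG] at h
    exact_mod_cast h
  linarith

open Finset in
/-- S-side bound -/
lemma Sbound (hn : 5 ≤ n) :
    (Nat.card G : ℝ) * (7 / (8 * (q : ℝ) ^ 9)) ≤ Nat.card {g : G | 3 ≤ fixd g} := by
  classical
  have hq := qge2 (F := F)
  have hqR : (2 : ℝ) ≤ (q : ℝ) := by exact_mod_cast hq
  set N3 : G → ℕ := fun g => ∏ i : Fin 3, (q ^ (fixd g) - q ^ (i : ℕ)) with hN3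
  set N4 : G → ℕ := fun g => ∏ i : Fin 4, (q ^ (fixd g) - q ^ (i : ℕ)) with hN4
  set A : ℕ := ∏ i : Fin 3, (q ^ 3 - q ^ (i : ℕ)) with hA
  have hm3 : ∑ g : G, N3 g = Nat.card G := master_fix (by omega)
  have hm4 : ∑ g : G, N4 g = Nat.card G := master_fix (by omega)
  have hsplit : ∀ g : G, (N3 g : ℝ) ≤
      (if fixd g = 3 then (A : ℝ) else 0) + 2 / (q : ℝ) ^ 4 * (N4 g : ℝ) := by
    intro g
    have hq4pos : (0 : ℝ) < (q : ℝ) ^ 4 := by positivity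
    have hN4nn : (0 : ℝ) ≤ 2 / (q : ℝ) ^ 4 * (N4 g : ℝ) := by positivity
    rcases lt_trichotomy (fixd g) 3 with h | h | h
    · have hz : N3 g = 0 := by
        refine Finset.prod_eq_zero (Finset.mem_univ (⟨fixd g, h⟩ : Fin 3)) ?_
        simp
      rw [hz]
      push_cast
      have : (0:ℝ) ≤ (if fixd g = 3 then (A : ℝ) else 0) := by positivity
      linarith
    · rw [if_pos h]
      have : N3 g = A := by simp only [hN3, hA]; rw [h]
      rw [this]
      linarith
    · rw [if_neg (by omega)]
      have h4 : 4 ≤ fixd g := by omega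
      have hrel : N4 g = N3 g * (q ^ (fixd g) - q ^ 3) := by
        show (∏ i : Fin 4, (q ^ fixd g - q ^ (i : ℕ)))
          = (∏ i : Fin 3, (q ^ fixd g - q ^ (i : ℕ))) * (q ^ (fixd g) - q ^ 3)
        rw [Fin.prod_univ_castSucc]
        rfl
      have hkey : q ^ 4 * N3 g ≤ 2 * N4 g := by
        have ha : q ^ 4 = q ^ 3 * q := by ring
        have hb : q ^ 3 * q ≤ q ^ (fixd g) := by
          calc q ^ 3 * q = q ^ 4 := by ring
          _ ≤ q ^ (fixd g) := Nat.pow_le_pow_right (by omega) h4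
        have hc : 2 * q ^ 3 ≤ q ^ 3 * q := by
          calc 2 * q ^ 3 = q ^ 3 * 2 := by ring
          _ ≤ q ^ 3 * q := Nat.mul_le_mul_left _ hq
        have hd : q ^ 4 ≤ 2 * (q ^ (fixd g) - q ^ 3) := by omega
        calc q ^ 4 * N3 g ≤ (2 * (q ^ (fixd g) - q ^ 3)) * N3 g :=
              Nat.mul_le_mul_right _ hd
        _ = 2 * N4 g := by rw [hrel]; ring
      have : (N3 g : ℝ) ≤ 2 / (q : ℝ) ^ 4 * (N4 g : ℝ) := by
        rw [div_mul_eq_mul_div, le_div_iff₀ hq4pos]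
        calc (N3 g : ℝ) * (q:ℝ)^4 = ((q ^ 4 * N3 g : ℕ) : ℝ) := by push_cast; ring
        _ ≤ ((2 * N4 g : ℕ) : ℝ) := by exact_mod_cast hkey
        _ = 2 * (N4 g : ℝ) := by push_cast; ring
      linarith
  set c3 : ℕ := (Finset.univ.filter (fun g : G => fixd g = 3)).card with hc3
  have hsum : (Nat.card G : ℝ) ≤ (c3 : ℝ) * (A : ℝ) + 2 / (q : ℝ) ^ 4 * (Nat.card G : ℝ) := by
    have h1 : (Nat.card G : ℝ) = ∑ g : G, (N3 g : ℝ) := by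
      rw [← hm3]; push_cast; rfl
    have h2 : ∑ g : G, (N3 g : ℝ) ≤
        ∑ g : G, ((if fixd g = 3 then (A : ℝ) else 0) + 2 / (q : ℝ) ^ 4 * (N4 g : ℝ)) :=
      Finset.sum_le_sum fun g _ => hsplit g
    have h3 : ∑ g : G, ((if fixd g = 3 then (A : ℝ) else 0) + 2 / (q : ℝ) ^ 4 * (N4 g : ℝ))
        = (c3 : ℝ) * (A : ℝ) + 2 / (q : ℝ) ^ 4 * (Nat.card G : ℝ) := by
      rw [Finset.sum_add_distrib]
      congr 1
      · rw [← Finset.sum_filter, Finset.sum_const, hc3]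
        simp [mul_comm]
      · rw [← Finset.mul_sum]
        congr 1
        rw [← hm4]; push_cast; rfl
    rw [h3] at h2; rw [← h1] at h2; exact h2
  have h16 : (16 : ℝ) ≤ (q : ℝ) ^ 4 := by
    have h := pow_le_pow_left₀ (by norm_num : (0:ℝ) ≤ 2) hqR 4
    norm_num at h
    exact h
  have hGnn : (0 : ℝ) ≤ (Nat.card G : ℝ) := Nat.cast_nonneg _
  have hfrac : 2 / (q : ℝ) ^ 4 * (Nat.card G : ℝ) ≤ (1 / 8) * (Nat.card G : ℝ) := by
    apply mul_le_mul_of_nonneg_right _ hGnn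
    rw [div_le_iff₀ (by positivity)]
    nlinarith
  have hc3A : (7 / 8) * (Nat.card G : ℝ) ≤ (c3 : ℝ) * (A : ℝ) := by linarith
  have hAq : (A : ℝ) ≤ (q : ℝ) ^ 9 := by
    have : A ≤ q ^ 9 := by
      calc A ≤ ∏ _i : Fin 3, q ^ 3 := Finset.prod_le_prod' fun i _ => Nat.sub_le _ _
      _ = q ^ 9 := by simp [← pow_mul]
    exact_mod_cast this
  have hc3nn : (0 : ℝ) ≤ (c3 : ℝ) := Nat.cast_nonneg _
  have hq9pos : (0 : ℝ) < (q : ℝ) ^ 9 := by positivity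
  have hfin : (Nat.card G : ℝ) * (7 / (8 * (q : ℝ) ^ 9)) ≤ (c3 : ℝ) := by
    rw [mul_div_assoc' ]
    rw [div_le_iff₀ (by positivity)]
    have h1 : (c3 : ℝ) * (A : ℝ) ≤ (c3 : ℝ) * (q : ℝ) ^ 9 := by
      exact mul_le_mul_of_nonneg_left hAq hc3nn
    nlinarith
  have hsub : (c3 : ℝ) ≤ (Nat.card {g : G | 3 ≤ fixd g} : ℝ) := by
    have h1 : Nat.card {g : G | 3 ≤ fixd g}
        = (Finset.univ.filter (fun g : G => 3 ≤ fixd g)).card := by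
      rw [Nat.card_eq_fintype_card, ← Fintype.card_subtype]
      rfl
    have h2 : c3 ≤ (Finset.univ.filter (fun g : G => 3 ≤ fixd g)).card := by
      apply Finset.card_le_card
      intro g hg
      simp only [Finset.mem_filter, Finset.mem_univ, true_and] at *
      omega
    rw [h1]
    exact_mod_cast h2
  linarith

end counts

lemma no_transvection {n : ℕ} (s t : Matrix.SpecialLinearGroup (Fin n) F)
    (hs : 3 ≤ fixd s) (ht : fixd t ≤ 1) :
    ¬ (s * t ≠ 1 ∧ Module.finrank F (LinearMap.ker
        (Matrix.toLin' ((s * t : Matrix.SpecialLinearGroup (Fin n) F) :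
          Matrix (Fin n) (Fin n) F) - LinearMap.id)) = n - 1) := by
  rintro ⟨-, hdim⟩
  set Ks := LinearMap.ker (Matrix.toLin' (s : Matrix (Fin n) (Fin n) F) - LinearMap.id) with hKs
  set Kt := LinearMap.ker (Matrix.toLin' (t : Matrix (Fin n) (Fin n) F) - LinearMap.id) with hKt
  set Kx := LinearMap.ker (Matrix.toLin' ((s * t : Matrix.SpecialLinearGroup (Fin n) F) :
      Matrix (Fin n) (Fin n) F) - LinearMap.id) with hKx
  have hsub : Ks ⊓ Kx ≤ Kt := by
    intro v hv
    rw [Submodule.mem_inf] at hv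
    obtain ⟨hv1, hv2⟩ := hv
    rw [hKs, mem_fixker] at hv1
    rw [hKx, mem_fixker] at hv2
    rw [hKt, mem_fixker]
    have h1 : Matrix.toLin' (s : Matrix (Fin n) (Fin n) F)
        (Matrix.toLin' (t : Matrix (Fin n) (Fin n) F) v) = v := by
      rw [← LinearMap.comp_apply, ← Matrix.toLin'_mul, ← Matrix.SpecialLinearGroup.coe_mul]
      exact hv2
    have h2 := h1.trans hv1.symm
    exact (Matrix.SpecialLinearGroup.toLin' s).injective h2
  have hmono : Module.finrank F ↥(Ks ⊓ Kx) ≤ Module.finrank F ↥Kt :=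
    Submodule.finrank_mono hsub
  have hsum := Submodule.finrank_sup_add_finrank_inf_eq Ks Kx
  have hsup : Module.finrank F ↥(Ks ⊔ Kx) ≤ n := by
    have h := Submodule.finrank_le (Ks ⊔ Kx)
    simpa [Module.finrank_fintype_fun_eq_card] using h
  have hsle : Module.finrank F ↥Ks ≤ n := by
    have h := Submodule.finrank_le Ks
    simpa [Module.finrank_fintype_fun_eq_card] using h
  have hfs : 3 ≤ Module.finrank F ↥Ks := hs
  have hft : Module.finrank F ↥Kt ≤ 1 := ht
  have hfx : Module.finrank F ↥Kx = n - 1 := hdim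
  set a := Module.finrank F ↥Ks
  set b := Module.finrank F ↥Kt
  set c := Module.finrank F ↥Kx
  set u := Module.finrank F ↥(Ks ⊔ Kx)
  set w := Module.finrank F ↥(Ks ⊓ Kx)
  omega

end Stmt6Aux

open Stmt6Aux in
/-- for a fixed finite field `F` (of cardinality the fixed prime
power `q`), there are `δ > 0`, `N`, and normal subsets `S n, T n ⊆ SL_n(F)` such
that no product `s * t` is a transvection, while `|S n|, |T n| ≥ δ|SL_n(F)|`
for all `n ≥ N`. -/
theorem stmt_6 (F : Type*) [Field F] [Fintype F] [DecidableEq F] :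
    ∃ (δ : ℝ) (N : ℕ) (S T : (n : ℕ) → Set (Matrix.SpecialLinearGroup (Fin n) F)),
      0 < δ ∧
      (∀ n, ∀ g : Matrix.SpecialLinearGroup (Fin n) F, ∀ s ∈ S n, g * s * g⁻¹ ∈ S n) ∧
      (∀ n, ∀ g : Matrix.SpecialLinearGroup (Fin n) F, ∀ t ∈ T n, g * t * g⁻¹ ∈ T n) ∧
      (∀ n, ∀ x ∈ S n * T n,
        ¬ (x ≠ 1 ∧ Module.finrank F (LinearMap.ker
            (Matrix.toLin' (x : Matrix (Fin n) (Fin n) F) - LinearMap.id)) = n - 1)) ∧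
      (∀ n, N ≤ n →
        δ * Nat.card (Matrix.SpecialLinearGroup (Fin n) F) ≤ Nat.card (S n) ∧
        δ * Nat.card (Matrix.SpecialLinearGroup (Fin n) F) ≤ Nat.card (T n)) := by
  have hq := qge2 (F := F)
  have hqR : (2 : ℝ) ≤ (Fintype.card F : ℝ) := by exact_mod_cast hq
  refine ⟨7 / (8 * (Fintype.card F : ℝ) ^ 9), 5,
    fun n => {g | 3 ≤ fixd g}, fun n => {g | fixd g ≤ 1}, ?_, ?_, ?_, ?_, ?_⟩
  · positivity
  · intro n g s hs
    simp only [Set.mem_setOf_eq] at *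
    rw [fixd_conj]
    exact hs
  · intro n g t ht
    simp only [Set.mem_setOf_eq] at *
    rw [fixd_conj]
    exact ht
  · intro n x hx
    rw [Set.mem_mul] at hx
    obtain ⟨s, hs, t, ht, rfl⟩ := hx
    exact no_transvection s t hs ht
  · intro n hn
    constructor
    · have h := Sbound (F := F) (n := n) hn
      calc 7 / (8 * (Fintype.card F : ℝ) ^ 9) *
            (Nat.card (Matrix.SpecialLinearGroup (Fin n) F) : ℝ)
          = (Nat.card (Matrix.SpecialLinearGroup (Fin n) F) : ℝ) *
            (7 / (8 * (Fintype.card F : ℝ) ^ 9)) := by ring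
        _ ≤ _ := h
    · have h := Tbound (F := F) (n := n) hn
      have hdle : 7 / (8 * (Fintype.card F : ℝ) ^ 9) ≤ 5 / 6 := by
        have h512 : (512 : ℝ) ≤ (Fintype.card F : ℝ) ^ 9 := by
          have h2 := pow_le_pow_left₀ (by norm_num : (0:ℝ) ≤ 2) hqR 9
          norm_num at h2
          exact h2
        rw [div_le_div_iff₀ (by positivity) (by norm_num)]
        nlinarith
      have hGnn : (0 : ℝ) ≤ (Nat.card (Matrix.SpecialLinearGroup (Fin n) F) : ℝ) :=
        Nat.cast_nonneg _
      calc 7 / (8 * (Fintype.card F : ℝ) ^ 9) *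
            (Nat.card (Matrix.SpecialLinearGroup (Fin n) F) : ℝ)
          ≤ 5 / 6 * (Nat.card (Matrix.SpecialLinearGroup (Fin n) F) : ℝ) :=
            mul_le_mul_of_nonneg_right hdle hGnn
        _ = (Nat.card (Matrix.SpecialLinearGroup (Fin n) F) : ℝ) * (5 / 6) := by ring
        _ ≤ _ := h
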